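/- Mutual exclusion for the set-based ticket protocol: consider the system with a global set bag ⊆ ℤ and counter avail : ℤ, where thread a taking transition τ₃ sets ticket(a) := avail, adds avail to bag, and increments avail; transition τ₄ (entering the critical section) is guarded by ticket(a) = min(bag); and τ₆ (leaving) removes ticket(a) from bag. Then in every reachable state: (1) if pc(t) ∈ {4,5,6} then ticket(t) < avail and ticket(t) ∈ bag; (2) distinct active threads hold distinct tickets; (3) if pc(t) ∈ {5,6} then ticket(t) is the minimum of bag; and consequently no two distinct threads are simultaneously in the critical section (pc ∈ {5,6}). -/

import Mathlib

/-- Global state of the set-based ticket protocol. -/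
structure SState (T : Type*) where
  avail : ℤ
  bag : Finset ℤ
  pc : T → Fin 8
  ticket : T → ℤ

/-- Initial condition: counter 0, empty bag, every thread at location 1 with ticket 0. -/
def SInit {T : Type*} (s : SState T) : Prop :=
  s.avail = 0 ∧ s.bag = ∅ ∧ (∀ t, s.pc t = 1) ∧ (∀ t, s.ticket t = 0)

/-- The transitions of thread `a` in the set-based ticket protocol. -/
def SStep {T : Type*} [DecidableEq T] (a : T) (s s' : SState T) : Prop :=
  -- τ₁ : 1 → 2
  (s.pc a = 1 ∧ s'.pc = Function.update s.pc a 2 ∧ s'.ticket = s.ticket ∧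
    s'.avail = s.avail ∧ s'.bag = s.bag) ∨
  -- τ₂ : 2 → 3
  (s.pc a = 2 ∧ s'.pc = Function.update s.pc a 3 ∧ s'.ticket = s.ticket ∧
    s'.avail = s.avail ∧ s'.bag = s.bag) ∨
  -- τ₃ : 3 → 4, takes a fresh ticket and announces it in the bag
  (s.pc a = 3 ∧ s'.pc = Function.update s.pc a 4 ∧
    s'.ticket = Function.update s.ticket a s.avail ∧
    s'.avail = s.avail + 1 ∧ s'.bag = insert s.avail s.bag) ∨
  -- τ₄ : 4 → 5, guarded by bag ≠ ∅ and ticket(a) = min(bag)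
  (s.pc a = 4 ∧ s.bag.Nonempty ∧ s.bag.min = (s.ticket a : WithBot ℤ) ∧
    s'.pc = Function.update s.pc a 5 ∧ s'.ticket = s.ticket ∧
    s'.avail = s.avail ∧ s'.bag = s.bag) ∨
  -- τ₅ : 5 → 6
  (s.pc a = 5 ∧ s'.pc = Function.update s.pc a 6 ∧ s'.ticket = s.ticket ∧
    s'.avail = s.avail ∧ s'.bag = s.bag) ∨
  -- τ₆ : 6 → 7, removes the ticket from the bag
  (s.pc a = 6 ∧ s'.pc = Function.update s.pc a 7 ∧ s'.ticket = s.ticket ∧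
    s'.avail = s.avail ∧ s'.bag = s.bag.erase (s.ticket a)) ∨
  -- τ₇ : 7 → 1
  (s.pc a = 7 ∧ s'.pc = Function.update s.pc a 1 ∧ s'.ticket = s.ticket ∧
    s'.avail = s.avail ∧ s'.bag = s.bag)

/-- A state is reachable if obtained from an initial state by finitely many transitions. -/
def SReachable {T : Type*} [DecidableEq T] (s : SState T) : Prop :=
  ∃ s₀, SInit s₀ ∧ Relation.ReflTransGen (fun u v => ∃ a, SStep a u v) s₀ s

/-!
The three properties of the statement, strengthened by `bag < avail`, are an inductive
invariant: the bound makes every ticket drawn at τ₃ fresh and larger than the current minimum,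
and at τ₆ the leaving thread is the only critical one. Two critical threads would both hold
`min bag`, contradicting distinctness of tickets.
-/

namespace SState

variable {T : Type*}

def Active (s : SState T) (t : T) : Prop := s.pc t = 4 ∨ s.pc t = 5 ∨ s.pc t = 6

def Critical (s : SState T) (t : T) : Prop := s.pc t = 5 ∨ s.pc t = 6

theorem Critical.active {s : SState T} {t : T} (h : s.Critical t) : s.Active t :=
  Or.inr h

theorem active_iff_of_pc_eq {s s' : SState T} {t : T} (h : s'.pc t = s.pc t) :
    s'.Active t ↔ s.Active t := by
  simp only [Active, h]

theorem critical_iff_of_pc_eq {s s' : SState T} {t : T} (h : s'.pc t = s.pc t) :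
    s'.Critical t ↔ s.Critical t := by
  simp only [Critical, h]

theorem pc_eq_of_update_of_ne [DecidableEq T] {s s' : SState T} {a t : T} {k : Fin 8}
    (hpc : s'.pc = Function.update s.pc a k) (hta : t ≠ a) : s'.pc t = s.pc t := by
  rw [hpc, Function.update_of_ne hta]

structure Invariant (s : SState T) : Prop where
  bag_lt_avail : ∀ x ∈ s.bag, x < s.avail
  ticket_mem_bag : ∀ t, s.Active t → s.ticket t ∈ s.bag
  ticket_injOn : Set.InjOn s.ticket {t | s.Active t}
  bag_min_eq : ∀ t, s.Critical t → s.bag.min = (s.ticket t : WithBot ℤ)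

namespace Invariant

variable {s s' : SState T}

theorem ticket_lt_avail (hs : s.Invariant) {t : T} (ht : s.Active t) : s.ticket t < s.avail :=
  hs.bag_lt_avail _ (hs.ticket_mem_bag t ht)

theorem critical_unique (hs : s.Invariant) {t t' : T} (ht : s.Critical t)
    (ht' : s.Critical t') : t = t' :=
  hs.ticket_injOn ht.active ht'.active <|
    WithBot.coe_inj.mp ((hs.bag_min_eq t ht).symm.trans (hs.bag_min_eq t' ht'))

theorem of_init (hs : SInit s) : s.Invariant := by
  obtain ⟨-, hbag, hpc, -⟩ := hs
  have hidle : ∀ t, ¬ s.Active t := fun t => by simp [Active, hpc t]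
  exact ⟨by simp [hbag], fun t ht => (hidle t ht).elim, fun t ht => (hidle t ht).elim,
    fun t ht => (hidle t ht.active).elim⟩

variable [DecidableEq T] {a : T} {k : Fin 8}

/-- Covers τ₁, τ₂, τ₄, τ₅ and τ₇. -/
theorem of_update_pc (hs : s.Invariant) (hpc : s'.pc = Function.update s.pc a k)
    (hticket : s'.ticket = s.ticket) (havail : s'.avail = s.avail) (hbag : s'.bag = s.bag)
    (hact : (k = 4 ∨ k = 5 ∨ k = 6) → s.Active a)
    (hcrit : (k = 5 ∨ k = 6) → s.bag.min = (s.ticket a : WithBot ℤ)) : s'.Invariant := by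
  have hactive : ∀ t, s'.Active t → s.Active t := by
    intro t ht
    rcases eq_or_ne t a with rfl | hta
    · exact hact (by simpa [Active, hpc] using ht)
    · exact (active_iff_of_pc_eq (pc_eq_of_update_of_ne hpc hta)).mp ht
  refine ⟨?_, ?_, ?_, ?_⟩
  · simpa only [havail, hbag] using hs.bag_lt_avail
  · intro t ht
    simpa only [hticket, hbag] using hs.ticket_mem_bag t (hactive t ht)
  · rw [hticket]
    exact hs.ticket_injOn.mono hactive
  · intro t ht
    rw [hticket, hbag]
    rcases eq_or_ne t a with rfl | hta
    · exact hcrit (by simpa [Critical, hpc] using ht)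
    · exact hs.bag_min_eq t
        ((critical_iff_of_pc_eq (pc_eq_of_update_of_ne hpc hta)).mp ht)

/-- Transition τ₃: the fresh ticket `avail` exceeds every ticket in the bag, so it collides
with no active ticket and does not change the minimum. -/
theorem take_ticket (hs : s.Invariant)
    (hpc : s'.pc = Function.update s.pc a 4)
    (hticket : s'.ticket = Function.update s.ticket a s.avail)
    (havail : s'.avail = s.avail + 1) (hbag : s'.bag = insert s.avail s.bag) :
    s'.Invariant := by
  have hold : ∀ t, t ≠ a → (s'.Active t ↔ s.Active t) ∧ (s'.Critical t ↔ s.Critical t) ∧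
      s'.ticket t = s.ticket t := fun t hta => by
    have hpc_t := pc_eq_of_update_of_ne hpc hta
    exact ⟨active_iff_of_pc_eq hpc_t, critical_iff_of_pc_eq hpc_t,
      by rw [hticket, Function.update_of_ne hta]⟩
  have hnew : s'.ticket a = s.avail := by rw [hticket, Function.update_self]
  refine ⟨?_, ?_, ?_, ?_⟩
  · intro x hx
    rw [hbag, Finset.mem_insert] at hx
    rcases hx with rfl | hx
    · omega
    · have := hs.bag_lt_avail x hx
      omega
  · intro t ht
    rw [hbag]
    rcases eq_or_ne t a with rfl | hta
    · rw [hnew]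
      exact Finset.mem_insert_self _ _
    · obtain ⟨hact, -, htk⟩ := hold t hta
      rw [htk]
      exact Finset.mem_insert_of_mem (hs.ticket_mem_bag t (hact.mp ht))
  · have hfresh : ∀ t, t ≠ a → s'.Active t → s'.ticket t ≠ s'.ticket a := by
      intro t hta ht
      obtain ⟨hact, -, htk⟩ := hold t hta
      rw [htk, hnew]
      exact (hs.ticket_lt_avail (hact.mp ht)).ne
    intro t ht t' ht' heq
    by_contra hne
    rcases eq_or_ne t a with rfl | hta
    · exact hfresh t' (Ne.symm hne) ht' heq.symm
    rcases eq_or_ne t' a with rfl | hta'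
    · exact hfresh t hta ht heq
    obtain ⟨hact, -, htk⟩ := hold t hta
    obtain ⟨hact', -, htk'⟩ := hold t' hta'
    exact hne (hs.ticket_injOn (hact.mp ht) (hact'.mp ht') (by rwa [← htk, ← htk']))
  · intro t ht
    have hta : t ≠ a := by
      rintro rfl
      simp [Critical, hpc] at ht
    obtain ⟨-, hcrit, htk⟩ := hold t hta
    have hcrit := hcrit.mp ht
    rw [hbag, htk, Finset.min_insert, hs.bag_min_eq t hcrit]
    exact min_eq_right (WithBot.coe_le_coe.mpr (hs.ticket_lt_avail hcrit.active).le)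

/-- Transition τ₆: the departing ticket belongs to no other active thread, and no other
thread is critical. -/
theorem release (hs : s.Invariant) (hpc₀ : s.pc a = 6)
    (hpc : s'.pc = Function.update s.pc a 7) (hticket : s'.ticket = s.ticket)
    (havail : s'.avail = s.avail) (hbag : s'.bag = s.bag.erase (s.ticket a)) :
    s'.Invariant := by
  have ha : s.Critical a := Or.inr hpc₀
  have hactive : ∀ t, s'.Active t → t ≠ a ∧ s.Active t := by
    intro t ht
    have hta : t ≠ a := by
      rintro rfl
      simp [Active, hpc] at ht
    exact ⟨hta, (active_iff_of_pc_eq (pc_eq_of_update_of_ne hpc hta)).mp ht⟩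
  refine ⟨?_, ?_, ?_, ?_⟩
  · intro x hx
    rw [hbag] at hx
    rw [havail]
    exact hs.bag_lt_avail x (Finset.mem_of_mem_erase hx)
  · intro t ht
    obtain ⟨hta, hact⟩ := hactive t ht
    rw [hticket, hbag, Finset.mem_erase]
    exact ⟨fun heq => hta (hs.ticket_injOn hact ha.active heq), hs.ticket_mem_bag t hact⟩
  · rw [hticket]
    exact hs.ticket_injOn.mono fun t ht => (hactive t ht).2
  · intro t ht
    obtain ⟨hta, -⟩ := hactive t ht.active
    have hcrit : s.Critical t :=
      (critical_iff_of_pc_eq (pc_eq_of_update_of_ne hpc hta)).mp ht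
    exact (hta (hs.critical_unique hcrit ha)).elim

theorem step (hs : s.Invariant) (hstep : SStep a s s') : s'.Invariant := by
  rcases hstep with ⟨-, hpc, ht, hav, hb⟩ | ⟨-, hpc, ht, hav, hb⟩ |
      ⟨-, hpc, ht, hav, hb⟩ | ⟨hpc₀, -, hmin, hpc, ht, hav, hb⟩ |
      ⟨hpc₀, hpc, ht, hav, hb⟩ | ⟨hpc₀, hpc, ht, hav, hb⟩ | ⟨-, hpc, ht, hav, hb⟩
  · exact hs.of_update_pc hpc ht hav hb (by omega) (by omega)
  · exact hs.of_update_pc hpc ht hav hb (by omega) (by omega)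
  · exact hs.take_ticket hpc ht hav hb
  · exact hs.of_update_pc hpc ht hav hb (fun _ => Or.inl hpc₀) fun _ => hmin
  · exact hs.of_update_pc hpc ht hav hb (fun _ => Or.inr (Or.inl hpc₀))
      fun _ => hs.bag_min_eq a (Or.inl hpc₀)
  · exact hs.release hpc₀ hpc ht hav hb
  · exact hs.of_update_pc hpc ht hav hb (by omega) (by omega)

end Invariant

end SState

theorem SReachable.invariant {T : Type*} [DecidableEq T] {s : SState T} (hs : SReachable s) :
    s.Invariant := by
  obtain ⟨s₀, hinit, hreach⟩ := hs
  induction hreach with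
  | refl => exact .of_init hinit
  | tail _ hstep ih =>
    obtain ⟨a, hstep⟩ := hstep
    exact ih.step hstep

theorem setTicket_mutex {T : Type*} [DecidableEq T] :
    ∀ s : SState T, SReachable s →
      ((∀ t, (s.pc t = 4 ∨ s.pc t = 5 ∨ s.pc t = 6) →
          s.ticket t < s.avail ∧ s.ticket t ∈ s.bag) ∧
       (∀ t t', t ≠ t' → (s.pc t = 4 ∨ s.pc t = 5 ∨ s.pc t = 6) →
          (s.pc t' = 4 ∨ s.pc t' = 5 ∨ s.pc t' = 6) → s.ticket t ≠ s.ticket t') ∧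
       (∀ t, (s.pc t = 5 ∨ s.pc t = 6) → s.bag.min = (s.ticket t : WithBot ℤ))) ∧
      (∀ t t', t ≠ t' →
        ¬ ((s.pc t = 5 ∨ s.pc t = 6) ∧ (s.pc t' = 5 ∨ s.pc t' = 6))) := by
  intro s hreach
  have hs := hreach.invariant
  exact ⟨⟨fun t ht => ⟨hs.ticket_lt_avail ht, hs.ticket_mem_bag t ht⟩,
      fun t t' hne ht ht' heq => hne (hs.ticket_injOn ht ht' heq), hs.bag_min_eq⟩,
    fun t t' hne ⟨ht, ht'⟩ => hne (hs.critical_unique ht ht')⟩
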